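/- Let l₂ : ℝ × ℝ → ℝ be defined by l₂(x, y) = (1/π)·arctan(4y(x − 1/2)) + 1/2. If a ∈ {0, 1} and ā, y ∈ ℝ satisfy |a − ā| ≤ 1/4 and y > 0, then |a − l₂(ā, y)| < 1/y. -/
import Mathlib

open Real

lemma arctan_lt_self' {z : ℝ} (hz : 0 < z) : Real.arctan z < z := by
  have h1 : 0 < Real.arctan z := by
    have := Real.arctan_strictMono hz
    rwa [Real.arctan_zero] at this
  have := Real.lt_tan h1 (Real.arctan_lt_pi_div_two z)
  rwa [Real.tan_arctan] at this

lemma key_bound {y : ℝ} (hy : 0 < y) :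
    1 / 2 - (1 / Real.pi) * Real.arctan y < 1 / y := by
  have h1 : Real.arctan y⁻¹ = Real.pi / 2 - Real.arctan y := Real.arctan_inv_of_pos hy
  have h2 : Real.arctan y⁻¹ < y⁻¹ := arctan_lt_self' (inv_pos.mpr hy)
  have h3 : Real.pi / 2 - Real.arctan y < 1 / y := by rw [one_div]; linarith
  have hπ : (1 : ℝ) < Real.pi := by linarith [Real.pi_gt_three]
  have h4 : 0 < Real.pi / 2 - Real.arctan y := by
    linarith [Real.arctan_lt_pi_div_two y]
  have e : 1 / 2 - (1 / Real.pi) * Real.arctan y = (Real.pi / 2 - Real.arctan y) / Real.pi := by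
    field_simp
  rw [e]
  calc (Real.pi / 2 - Real.arctan y) / Real.pi < Real.pi / 2 - Real.arctan y :=
        div_lt_self h4 hπ
    _ < 1 / y := h3

/-- The function l₂(x, y) = (1/π)·arctan(4y(x − 1/2)) + 1/2. -/
noncomputable def l2 (x y : ℝ) : ℝ := (1 / Real.pi) * Real.arctan (4 * y * (x - 1 / 2)) + 1 / 2

/-- Proposition 4 of the paper: l₂ approaches a ∈ {0,1} with dynamic precision 1/y. -/
theorem l2_approx (a : ℝ) (ha : a = 0 ∨ a = 1) (abar y : ℝ)
    (hab : |a - abar| ≤ 1 / 4) (hy : 0 < y) :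
    |a - l2 abar y| < 1 / y := by
  have hπ : (0 : ℝ) < Real.pi := Real.pi_pos
  have hkey := key_bound hy
  have hinv : (0 : ℝ) < 1 / Real.pi := by positivity
  obtain ⟨hab1, hab2⟩ := abs_le.mp hab
  rcases ha with rfl | rfl
  · -- a = 0
    have ht : 4 * y * (abar - 1 / 2) ≤ -y := by nlinarith
    have hL2 : Real.arctan (4 * y * (abar - 1 / 2)) ≤ -Real.arctan y := by
      have := Real.arctan_strictMono.monotone ht
      rwa [Real.arctan_neg] at this
    have hL1 := Real.neg_pi_div_two_lt_arctan (4 * y * (abar - 1 / 2))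
    have hmul : (1 / Real.pi) * Real.arctan (4 * y * (abar - 1 / 2)) ≤
        (1 / Real.pi) * (-Real.arctan y) := by
      exact mul_le_mul_of_nonneg_left hL2 hinv.le
    have hhalf : (1 / Real.pi) * (Real.pi / 2) = 1 / 2 := by field_simp
    have hpos : 0 < l2 abar y := by
      unfold l2
      nlinarith [mul_lt_mul_of_pos_left hL1 hinv]
    rw [zero_sub, abs_neg, abs_of_pos hpos]
    unfold l2
    nlinarith
  · -- a = 1
    have ht : y ≤ 4 * y * (abar - 1 / 2) := by nlinarith
    have hL2 : Real.arctan y ≤ Real.arctan (4 * y * (abar - 1 / 2)) :=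
      Real.arctan_strictMono.monotone ht
    have hL1 := Real.arctan_lt_pi_div_two (4 * y * (abar - 1 / 2))
    have hmul : (1 / Real.pi) * Real.arctan y ≤
        (1 / Real.pi) * Real.arctan (4 * y * (abar - 1 / 2)) :=
      mul_le_mul_of_nonneg_left hL2 hinv.le
    have hhalf : (1 / Real.pi) * (Real.pi / 2) = 1 / 2 := by field_simp
    have hlt : l2 abar y < 1 := by
      unfold l2
      nlinarith [mul_lt_mul_of_pos_left hL1 hinv]
    rw [abs_of_pos (by linarith : 0 < 1 - l2 abar y)]
    unfold l2
    unfold l2 at hlt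
    nlinarith
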